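/- Let G be a multigraph with χ'(G) = k ≥ Δ(G)+1. Then any two distinct maximal k-dense subgraphs of G are vertex-disjoint. -/

import Mathlib

/-- A finite multigraph: finite vertex and edge types, each edge has an unordered pair of
endvertices, and there are no loops. -/
structure Multigraph where
  V : Type
  E : Type
  [fintypeV : Fintype V]
  [fintypeE : Fintype E]
  ends : E → Sym2 V
  loopless : ∀ e, ¬ (ends e).IsDiag

attribute [instance] Multigraph.fintypeV Multigraph.fintypeE

namespace Multigraph

section Basic

variable (G : Multigraph)

/-- The degree of a vertex: the number of edges incident with it. -/
noncomputable def degree (v : G.V) : ℕ := {e : G.E | v ∈ G.ends e}.ncard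

/-- The maximum degree Δ(G). -/
noncomputable def maxDegree : ℕ := sSup (Set.range G.degree)

/-- The number of edges joining `x` and `y` (the multiplicity e_G(x,y)). -/
noncomputable def mult (x y : G.V) : ℕ := {e : G.E | G.ends e = s(x, y)}.ncard

/-- The maximum multiplicity μ(G). -/
noncomputable def maxMult : ℕ := sSup {m : ℕ | ∃ x y : G.V, G.mult x y = m}

/-- `c` is a proper edge coloring, with palette `{1,…,k}`, of the edges in `D`
(edges sharing an endvertex get distinct colors). -/
def IsProperColoringOn (k : ℕ) (D : Set G.E) (c : G.E → ℕ) : Prop :=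
  (∀ e ∈ D, c e ∈ Set.Icc 1 k) ∧
  ∀ e ∈ D, ∀ f ∈ D, e ≠ f → (∃ v, v ∈ G.ends e ∧ v ∈ G.ends f) → c e ≠ c f

/-- A proper `k`-edge-coloring of all of `G`. -/
def IsProperColoring (k : ℕ) (c : G.E → ℕ) : Prop := G.IsProperColoringOn k Set.univ c

/-- The chromatic index of the subgraph of `G` consisting of the edges in `D`
(vertices are irrelevant for edge colorings). -/
noncomputable def chromIndexOn (D : Set G.E) : ℕ := sInf {k | ∃ c, G.IsProperColoringOn k D c}

/-- The chromatic index χ'(G). -/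
noncomputable def chromIndex : ℕ := G.chromIndexOn Set.univ

/-- The set of colors of the palette `{1,…,k}` missing at `v`, where only the edges in `D`
are regarded as colored. -/
def missingOn (k : ℕ) (D : Set G.E) (c : G.E → ℕ) (v : G.V) : Set ℕ :=
  {i | i ∈ Set.Icc 1 k ∧ ∀ e ∈ D, v ∈ G.ends e → c e ≠ i}

/-- `X` is elementary: missing-color sets of distinct vertices of `X` are disjoint. -/
def IsElementaryOn (k : ℕ) (D : Set G.E) (c : G.E → ℕ) (X : Set G.V) : Prop :=
  ∀ u ∈ X, ∀ v ∈ X, u ≠ v → G.missingOn k D c u ∩ G.missingOn k D c v = ∅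

/-- The boundary ∂_G(X): edges with an endvertex in `X` and an endvertex outside `X`. -/
def boundary (X : Set G.V) : Set G.E :=
  {e | (∃ v ∈ G.ends e, v ∈ X) ∧ (∃ v ∈ G.ends e, v ∉ X)}

/-- `X` is strongly closed (w.r.t. the coloring `c` of the edges in `D`): every color on a
boundary edge of `X` is present at every vertex of `X`, and the colors on the boundary edges
are pairwise distinct. -/
def IsStronglyClosedOn (D : Set G.E) (c : G.E → ℕ) (X : Set G.V) : Prop :=
  (∀ e ∈ G.boundary X ∩ D, ∀ v ∈ X, ∃ f ∈ D, v ∈ G.ends f ∧ c f = c e) ∧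
  ∀ e ∈ G.boundary X ∩ D, ∀ f ∈ G.boundary X ∩ D, e ≠ f → c e ≠ c f

end Basic

/-- A subgraph of `G`: a set of vertices together with a set of edges all of whose
endvertices belong to the vertex set. -/
structure Subgraph (G : Multigraph) where
  verts : Set G.V
  edges : Set G.E
  support : ∀ e ∈ edges, ∀ v, v ∈ G.ends e → v ∈ verts

section Sub

variable (G : Multigraph)

/-- The whole graph, as a subgraph of itself. -/
def top : G.Subgraph := ⟨Set.univ, Set.univ, fun _ _ _ _ => Set.mem_univ _⟩

/-- `H` is a `k`-dense subgraph: it has an odd number of vertices and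
`|E(H)| = (|V(H)|-1)·k/2`. -/
def IsDense (k : ℕ) (H : G.Subgraph) : Prop :=
  Odd H.verts.ncard ∧ 2 * H.edges.ncard = (H.verts.ncard - 1) * k

/-- `H` is a `k`-dense subgraph of `G - F` (the graph obtained by deleting the edges of `F`). -/
def IsDenseIn (F : Set G.E) (k : ℕ) (H : G.Subgraph) : Prop :=
  H.edges ∩ F = ∅ ∧ G.IsDense k H

/-- `H` is a maximal `k`-dense subgraph of `G - F`. -/
def IsMaximalDenseIn (F : Set G.E) (k : ℕ) (H : G.Subgraph) : Prop :=
  G.IsDenseIn F k H ∧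
  ∀ H' : G.Subgraph, G.IsDenseIn F k H' → H.verts ⊆ H'.verts → H.edges ⊆ H'.edges →
    H.verts = H'.verts ∧ H.edges = H'.edges

/-- The density Γ(H) of a subgraph `H` of `G`:
`max { 2|E(H')|/(|V(H')|-1) : H' ⊆ H, |V(H')| ≥ 3 odd }` (and `0` if there is no such `H'`,
since in `ℝ` the supremum of the empty set is `0`). -/
noncomputable def densityOf (H : G.Subgraph) : ℝ :=
  sSup {x : ℝ | ∃ H' : G.Subgraph, H'.verts ⊆ H.verts ∧ H'.edges ⊆ H.edges ∧
    3 ≤ H'.verts.ncard ∧ Odd H'.verts.ncard ∧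
    x = 2 * (H'.edges.ncard : ℝ) / ((H'.verts.ncard : ℝ) - 1)}

/-- The density Γ(G). -/
noncomputable def density : ℝ := G.densityOf G.top

/-- `e` is a `k`-critical edge of `G`: `χ'(G-e) = k < χ'(G) = k+1`. -/
def IsCriticalEdge (k : ℕ) (e : G.E) : Prop :=
  G.chromIndexOn {e}ᶜ = k ∧ G.chromIndex = k + 1

/-- Degree of `v` in the subgraph consisting of the edges in `D`. -/
noncomputable def degreeOn (D : Set G.E) (v : G.V) : ℕ := {e : G.E | e ∈ D ∧ v ∈ G.ends e}.ncard

/-- Maximum degree of the subgraph consisting of the edges in `D`. -/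
noncomputable def maxDegreeOn (D : Set G.E) : ℕ := sSup (Set.range (G.degreeOn D))

/-- Multiplicity of the pair `x,y` in the subgraph consisting of the edges in `D`. -/
noncomputable def multOn (D : Set G.E) (x y : G.V) : ℕ :=
  {e : G.E | e ∈ D ∧ G.ends e = s(x, y)}.ncard

/-- Maximum multiplicity of the subgraph consisting of the edges in `D`. -/
noncomputable def maxMultOn (D : Set G.E) : ℕ := sSup {m : ℕ | ∃ x y : G.V, G.multOn D x y = m}

/-- The simple graph underlying the subgraph of `G` with edge set `D`. -/
def simpleOn (D : Set G.E) : SimpleGraph G.V where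
  Adj a b := a ≠ b ∧ ∃ e ∈ D, G.ends e = s(a, b)
  symm := by
    refine ⟨?_⟩
    rintro a b ⟨hab, e, he, hh⟩
    exact ⟨hab.symm, e, he, hh.trans Sym2.eq_swap⟩
  loopless := by refine ⟨?_⟩; rintro a ⟨h, -⟩; exact h rfl

/-- The diameter (in `ℕ∞`) of the subgraph with vertex set `S` and edge set `D`:
the greatest distance between a pair of its vertices. -/
noncomputable def diamOn (S : Set G.V) (D : Set G.E) : ℕ∞ :=
  sSup {d : ℕ∞ | ∃ u ∈ S, ∃ v ∈ S, (G.simpleOn D).edist u v = d}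

/-- The distance (in `ℕ∞`) between two edges of `G`: the length of a shortest path connecting
an endvertex of `e` and an endvertex of `f`. -/
noncomputable def edgeDist (e f : G.E) : ℕ∞ :=
  sInf {d : ℕ∞ | ∃ u v : G.V, u ∈ G.ends e ∧ v ∈ G.ends f ∧
    (G.simpleOn Set.univ).edist u v = d}

/-- A matching: a set of edges no two of which share an endvertex. -/
def IsMatching (M : Set G.E) : Prop :=
  ∀ e ∈ M, ∀ f ∈ M, e ≠ f → ∀ v : G.V, v ∈ G.ends e → v ∉ G.ends f

/-- An edge `e ∈ E_G(x,y)` is fully `G`-saturated if `d_G(x) = d_G(y) = Δ(G)` and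
`e_G(x,y) = μ(G)`. -/
def IsFullySaturated (e : G.E) : Prop :=
  ∃ x y : G.V, G.ends e = s(x, y) ∧ G.degree x = G.maxDegree ∧ G.degree y = G.maxDegree ∧
    G.mult x y = G.maxMult

/-- One step along a Kempe `(α,β)`-chain: an edge of `D` colored `α` or `β` joining the
two vertices. -/
def chainStep (D : Set G.E) (c : G.E → ℕ) (α β : ℕ) (a b : G.V) : Prop :=
  ∃ e ∈ D, G.ends e = s(a, b) ∧ (c e = α ∨ c e = β)

/-- `u` and `v` lie on the same `(α,β)`-chain, i.e. `P_u(α,β) = P_v(α,β)`. -/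
def sameChain (D : Set G.E) (c : G.E → ℕ) (α β : ℕ) (u v : G.V) : Prop :=
  Relation.ReflTransGen (G.chainStep D c α β) u v

end Sub

/-- The Goldberg–Seymour theorem (proved by Chen, Jing and Zang), as a hypothesis:
every multigraph `G'` with `χ'(G') ≥ Δ(G')+2` satisfies `χ'(G') = ⌈Γ(G')⌉`. -/
def GoldbergSeymour : Prop :=
  ∀ G' : Multigraph, G'.maxDegree + 2 ≤ G'.chromIndex → (G'.chromIndex : ℤ) = ⌈G'.density⌉

/-- A (general) multi-fan at `x` with respect to the edge `e₀ ∈ E_G(x,y₀)` and the coloring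
`c` of the edges in `D` with palette `{1,…,k}`: a sequence `(x, e₀, y₀, e₁, y₁, …, e_p, y_p)`
of vertices and pairwise distinct edges with `e_i ∈ E_G(x, y_i)` and, for `i ≥ 1`,
`c(e_i)` missing at `y_j` for some `j < i`. -/
structure MultiFan (G : Multigraph) (k : ℕ) (D : Set G.E) (c : G.E → ℕ)
    (x : G.V) (e₀ : G.E) (y₀ : G.V) where
  p : ℕ
  edge : Fin (p + 1) → G.E
  vx : Fin (p + 1) → G.V
  edge_zero : edge 0 = e₀
  vx_zero : vx 0 = y₀
  ends_eq : ∀ i, G.ends (edge i) = s(x, vx i)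
  edge_inj : Function.Injective edge
  fan_cond : ∀ i : Fin (p + 1), i ≠ 0 →
    ∃ j : Fin (p + 1), j < i ∧ c (edge i) ∈ G.missingOn k D c (vx j)

namespace MultiFan

variable {G : Multigraph} {k : ℕ} {D : Set G.E} {c : G.E → ℕ} {x : G.V} {e₀ : G.E} {y₀ : G.V}

/-- The vertex set `V(F)` of a multi-fan. -/
def verts (F : MultiFan G k D c x e₀ y₀) : Set G.V := insert x (Set.range F.vx)

/-- `F` is a subsequence of `F'`. -/
def Subseq (F F' : MultiFan G k D c x e₀ y₀) : Prop :=
  ∃ ι : Fin (F.p + 1) → Fin (F'.p + 1), StrictMono ι ∧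
    ∀ i, F'.edge (ι i) = F.edge i ∧ F'.vx (ι i) = F.vx i

/-- `F` is a maximal multi-fan: no multi-fan contains it as a proper subsequence. -/
def IsMaximal (F : MultiFan G k D c x e₀ y₀) : Prop :=
  ∀ F' : MultiFan G k D c x e₀ y₀, F.Subseq F' → F'.p = F.p

/-- `F` contains no `i`-edge. -/
def NoColor (F : MultiFan G k D c x e₀ y₀) (i : ℕ) : Prop :=
  ∀ j, F.edge j ∈ D → c (F.edge j) ≠ i

/-- `F` is a multi-fan without `i`-edges that is maximal among such. -/
def IsMaximalWithout (F : MultiFan G k D c x e₀ y₀) (i : ℕ) : Prop :=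
  F.NoColor i ∧
  ∀ F' : MultiFan G k D c x e₀ y₀, F'.NoColor i → F.Subseq F' → F'.p = F.p

/-- `e_F(x,z)`: the number of edges of the multi-fan `F` joining `x` and `z`. -/
noncomputable def multAt (F : MultiFan G k D c x e₀ y₀) (z : G.V) : ℕ :=
  Nat.card {j : Fin (F.p + 1) // F.vx j = z}

end MultiFan

end Multigraph

/-! Fix a proper `k`-edge-coloring of `G`. Each color class is a matching, so inside a subgraph
on an odd number `n` of vertices it has at most `(n - 1) / 2` edges; for a `k`-dense subgraph all
`k` of these bounds are attained, i.e. every color class covers all but one vertex of it.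
If `v` lies in two `k`-dense subgraphs `H₁` and `H₂`, take a color `α` missing at `v` (it exists
as `Δ(G) < k`): the `α`-edges of `H₁` cover `V(H₁) - v`, those of `H₂` cover `V(H₂) - v`, and since
each vertex has at most one `α`-edge, the `α`-edges of `H₁ ∩ H₂` cover `V(H₁ ∩ H₂) - v`. So
`H₁ ∩ H₂` has an odd number of vertices and at most `(|V(H₁ ∩ H₂)| - 1) k / 2` edges, and
inclusion–exclusion shows that `H₁ ∪ H₂` is `k`-dense. Maximality then gives
`H₁ = H₁ ∪ H₂ = H₂`. -/

namespace Multigraph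

variable {G : Multigraph} {k : ℕ} {c : G.E → ℕ}

def endpoints (G : Multigraph) (M : Set G.E) : Set G.V := ⋃ e ∈ M, {v | v ∈ G.ends e}

lemma mem_endpoints {M : Set G.E} {v : G.V} : v ∈ G.endpoints M ↔ ∃ e ∈ M, v ∈ G.ends e := by
  simp [endpoints]

lemma ncard_setOf_mem_ends (e : G.E) : {v | v ∈ G.ends e}.ncard = 2 := by
  classical
  rw [← Sym2.card_toFinset_of_not_isDiag _ (G.loopless e), ← Set.ncard_coe_finset]
  congr 1
  ext v
  simp

lemma IsMatching.ncard_endpoints {M : Set G.E} (hM : G.IsMatching M) :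
    (G.endpoints M).ncard = 2 * M.ncard := by
  rw [endpoints, M.toFinite.ncard_biUnion (fun _ _ ↦ Set.toFinite _)]
  · rw [finsum_mem_congr rfl fun e _ ↦ ncard_setOf_mem_ends e, ← finsum_one, mul_finsum_mem,
      mul_one]
  · exact fun e he f hf hef ↦ Set.disjoint_left.2 fun v hve hvf ↦ hM e he f hf hef v hve hvf

lemma endpoints_subset_verts {M : Set G.E} {H : G.Subgraph} (hM : M ⊆ H.edges) :
    G.endpoints M ⊆ H.verts := fun v hv ↦
  let ⟨e, he, hve⟩ := mem_endpoints.1 hv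
  H.support e (hM he) v hve

lemma exists_isProperColoring_chromIndex (G : Multigraph) :
    ∃ c, G.IsProperColoring G.chromIndex c := by
  let idx := Fintype.equivFin G.E
  have hne : {n | ∃ c, G.IsProperColoringOn n Set.univ c}.Nonempty :=
    ⟨Fintype.card G.E, fun e ↦ idx e + 1, fun e _ ↦ ⟨le_add_self, (idx e).isLt⟩,
      fun e _ f _ hef _ h ↦ hef (idx.injective (Fin.ext (Nat.add_right_cancel h)))⟩
  exact Nat.sInf_mem hne

lemma degree_le_maxDegree (v : G.V) : G.degree v ≤ G.maxDegree :=
  le_csSup (Set.finite_range _).bddAbove ⟨v, rfl⟩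

lemma missingOn_nonempty_of_degree_lt {v : G.V} (hv : G.degree v < k) :
    (G.missingOn k Set.univ c v).Nonempty := by
  by_contra! h
  have hcover : Set.Icc 1 k ⊆ c '' {e | v ∈ G.ends e} := by
    intro i hi
    by_contra hi'
    exact h.subset ⟨hi, fun e _ hve hci ↦ hi' ⟨e, hve, hci⟩⟩
  have hk : k ≤ G.degree v := by
    simpa [degree] using (Set.ncard_le_ncard hcover).trans (Set.ncard_image_le (Set.toFinite _))
  exact hk.not_gt hv

namespace Subgraph

@[ext]
lemma ext {H H' : G.Subgraph} (hv : H.verts = H'.verts) (he : H.edges = H'.edges) : H = H' := by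
  cases H; cases H'; congr

instance : Max G.Subgraph where
  max H₁ H₂ := ⟨H₁.verts ∪ H₂.verts, H₁.edges ∪ H₂.edges, by
    rintro e (he | he) v hv
    exacts [Or.inl (H₁.support e he v hv), Or.inr (H₂.support e he v hv)]⟩

instance : Min G.Subgraph where
  min H₁ H₂ := ⟨H₁.verts ∩ H₂.verts, H₁.edges ∩ H₂.edges,
    fun e he v hv ↦ ⟨H₁.support e he.1 v hv, H₂.support e he.2 v hv⟩⟩

variable (H₁ H₂ : G.Subgraph)

@[simp] lemma verts_sup : (H₁ ⊔ H₂).verts = H₁.verts ∪ H₂.verts := rfl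
@[simp] lemma edges_sup : (H₁ ⊔ H₂).edges = H₁.edges ∪ H₂.edges := rfl
@[simp] lemma verts_inf : (H₁ ⊓ H₂).verts = H₁.verts ∩ H₂.verts := rfl
@[simp] lemma edges_inf : (H₁ ⊓ H₂).edges = H₁.edges ∩ H₂.edges := rfl

end Subgraph

lemma isDense_iff {H : G.Subgraph} :
    G.IsDense k H ↔ Odd H.verts.ncard ∧ 2 * H.edges.ncard + k = H.verts.ncard * k := by
  refine and_congr_right fun ⟨n, hn⟩ ↦ ?_
  rw [hn, Nat.add_sub_cancel, add_one_mul, Nat.add_right_cancel_iff]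

lemma endpoints_colorClass_subset_sdiff {α : ℕ} {v : G.V}
    (hα : α ∈ G.missingOn k Set.univ c v) (H : G.Subgraph) :
    G.endpoints {e ∈ H.edges | c e = α} ⊆ H.verts \ {v} := fun w hw ↦
  ⟨endpoints_subset_verts (fun _ he ↦ he.1) hw, by
    rintro rfl
    obtain ⟨e, he, hwe⟩ := mem_endpoints.1 hw
    exact hα.2 e trivial hwe he.2⟩

namespace IsProperColoring

variable (hc : G.IsProperColoring k c)
include hc

lemma isMatching_colorClass (D : Set G.E) (m : ℕ) : G.IsMatching {e ∈ D | c e = m} :=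
  fun e he f hf hef v hve hvf ↦ hc.2 e trivial f trivial hef ⟨v, hve, hvf⟩ (he.2.trans hf.2.symm)

lemma two_mul_ncard_colorClass_lt {H : G.Subgraph} (hodd : Odd H.verts.ncard) (m : ℕ) :
    2 * {e ∈ H.edges | c e = m}.ncard < H.verts.ncard := by
  have hle : 2 * {e ∈ H.edges | c e = m}.ncard ≤ H.verts.ncard := by
    rw [← (hc.isMatching_colorClass H.edges m).ncard_endpoints]
    exact Set.ncard_le_ncard (endpoints_subset_verts fun _ he ↦ he.1)
  exact hle.lt_of_ne fun h ↦ Nat.not_even_iff_odd.2 hodd (h ▸ even_two_mul _)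

lemma ncard_eq_sum_ncard_colorClass (D : Set G.E) :
    D.ncard = ∑ m ∈ Finset.Icc 1 k, {e ∈ D | c e = m}.ncard := by
  classical
  rw [Set.ncard_eq_toFinset_card' D, Finset.card_eq_sum_card_fiberwise
    (fun e _ ↦ Finset.mem_Icc.2 (hc.1 e trivial))]
  refine Finset.sum_congr rfl fun m _ ↦ ?_
  rw [Set.ncard_eq_toFinset_card']
  congr 1
  ext e
  simp

lemma two_mul_ncard_add_eq_sum (D : Set G.E) :
    2 * D.ncard + k = ∑ m ∈ Finset.Icc 1 k, (2 * {e ∈ D | c e = m}.ncard + 1) := by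
  rw [Finset.sum_add_distrib, ← Finset.mul_sum, ← hc.ncard_eq_sum_ncard_colorClass]
  simp

lemma two_mul_ncard_edges_add_le {H : G.Subgraph} (hodd : Odd H.verts.ncard) :
    2 * H.edges.ncard + k ≤ H.verts.ncard * k :=
  calc 2 * H.edges.ncard + k
      = ∑ m ∈ Finset.Icc 1 k, (2 * {e ∈ H.edges | c e = m}.ncard + 1) :=
        hc.two_mul_ncard_add_eq_sum H.edges
    _ ≤ ∑ _m ∈ Finset.Icc 1 k, H.verts.ncard :=
        Finset.sum_le_sum fun m _ ↦ hc.two_mul_ncard_colorClass_lt hodd m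
    _ = H.verts.ncard * k := by simp [mul_comm]

lemma two_mul_ncard_colorClass_add_one_eq {H : G.Subgraph} (hH : G.IsDense k H) {m : ℕ}
    (hm : m ∈ Set.Icc 1 k) :
    2 * {e ∈ H.edges | c e = m}.ncard + 1 = H.verts.ncard := by
  have hsum : ∑ m ∈ Finset.Icc 1 k, (2 * {e ∈ H.edges | c e = m}.ncard + 1)
      = ∑ _m ∈ Finset.Icc 1 k, H.verts.ncard := by
    rw [← hc.two_mul_ncard_add_eq_sum, (isDense_iff.1 hH).2]
    simp [mul_comm]
  exact (Finset.sum_eq_sum_iff_of_le fun m _ ↦ hc.two_mul_ncard_colorClass_lt hH.1 m).1 hsum m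
    (Finset.mem_Icc.2 hm)

lemma endpoints_colorClass_eq {H : G.Subgraph} (hH : G.IsDense k H) {v : G.V}
    (hv : v ∈ H.verts) {α : ℕ} (hα : α ∈ G.missingOn k Set.univ c v) :
    G.endpoints {e ∈ H.edges | c e = α} = H.verts \ {v} := by
  refine Set.eq_of_subset_of_ncard_le (endpoints_colorClass_subset_sdiff hα H) ?_
  rw [Set.ncard_sdiff_singleton_of_mem hv, (hc.isMatching_colorClass _ α).ncard_endpoints,
    ← hc.two_mul_ncard_colorClass_add_one_eq hH hα.1, Nat.add_sub_cancel]

lemma odd_ncard_verts_inf {H₁ H₂ : G.Subgraph} (h₁ : G.IsDense k H₁) (h₂ : G.IsDense k H₂)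
    {v : G.V} (hv₁ : v ∈ H₁.verts) (hv₂ : v ∈ H₂.verts) {α : ℕ}
    (hα : α ∈ G.missingOn k Set.univ c v) :
    Odd (H₁ ⊓ H₂).verts.ncard := by
  have hv : v ∈ (H₁ ⊓ H₂).verts := ⟨hv₁, hv₂⟩
  have hcover : G.endpoints {e ∈ (H₁ ⊓ H₂).edges | c e = α} = (H₁ ⊓ H₂).verts \ {v} := by
    refine (endpoints_colorClass_subset_sdiff hα _).antisymm ?_
    rintro w ⟨⟨hw₁, hw₂⟩, hwv⟩
    obtain ⟨e₁, he₁, hwe₁⟩ := mem_endpoints.1 <| by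
      rw [hc.endpoints_colorClass_eq h₁ hv₁ hα]; exact ⟨hw₁, hwv⟩
    obtain ⟨e₂, he₂, hwe₂⟩ := mem_endpoints.1 <| by
      rw [hc.endpoints_colorClass_eq h₂ hv₂ hα]; exact ⟨hw₂, hwv⟩
    obtain rfl : e₁ = e₂ := by
      by_contra hne
      exact hc.2 e₁ trivial e₂ trivial hne ⟨w, hwe₁, hwe₂⟩ (he₁.2.trans he₂.2.symm)
    exact mem_endpoints.2 ⟨e₁, ⟨⟨he₁.1, he₂.1⟩, he₁.2⟩, hwe₁⟩
  have hcard := congrArg Set.ncard hcover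
  rw [(hc.isMatching_colorClass _ α).ncard_endpoints,
    Set.ncard_sdiff_singleton_of_mem hv] at hcard
  have hpos : 0 < (H₁ ⊓ H₂).verts.ncard := (Set.ncard_pos (Set.toFinite _)).2 ⟨v, hv⟩
  exact Nat.odd_iff.2 (by omega)

lemma isDense_sup {H₁ H₂ : G.Subgraph} (h₁ : G.IsDense k H₁) (h₂ : G.IsDense k H₂)
    (hodd : Odd (H₁ ⊓ H₂).verts.ncard) :
    G.IsDense k (H₁ ⊔ H₂) := by
  rw [isDense_iff] at h₁ h₂ ⊢
  have hV := Set.ncard_union_add_ncard_inter H₁.verts H₂.verts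
  have hE := Set.ncard_union_add_ncard_inter H₁.edges H₂.edges
  have hodd' : Odd (H₁ ⊔ H₂).verts.ncard := by
    obtain ⟨⟨a, ha⟩, -⟩ := h₁
    obtain ⟨⟨b, hb⟩, -⟩ := h₂
    obtain ⟨i, hi⟩ := hodd
    exact ⟨a + b - i, by simp only [Subgraph.verts_sup, Subgraph.verts_inf] at *; omega⟩
  have hinf := hc.two_mul_ncard_edges_add_le hodd
  have hsup := hc.two_mul_ncard_edges_add_le hodd'
  simp only [Subgraph.verts_sup, Subgraph.verts_inf, Subgraph.edges_sup,
    Subgraph.edges_inf] at *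
  have hVk := congrArg (· * k) hV
  simp only [add_mul] at hVk
  exact ⟨hodd', by omega⟩

end IsProperColoring

lemma IsMaximalDenseIn.eq_of_isDenseIn {F : Set G.E} {H H' : G.Subgraph}
    (hH : G.IsMaximalDenseIn F k H) (hH' : G.IsDenseIn F k H') (hv : H.verts ⊆ H'.verts)
    (he : H.edges ⊆ H'.edges) : H = H' :=
  Subgraph.ext (hH.2 H' hH' hv he).1 (hH.2 H' hH' hv he).2

end Multigraph

/-- **Lemma 2.1.** If `χ'(G) = k ≥ Δ(G)+1`, then distinct maximal `k`-dense subgraphs of `G`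
are pairwise vertex-disjoint. -/
theorem maximal_dense_subgraphs_disjoint (G : Multigraph) (k : ℕ)
    (hk : G.chromIndex = k) (hΔ : G.maxDegree + 1 ≤ k)
    (H₁ H₂ : G.Subgraph)
    (h₁ : G.IsMaximalDenseIn ∅ k H₁) (h₂ : G.IsMaximalDenseIn ∅ k H₂)
    (hne : H₁ ≠ H₂) :
    Disjoint H₁.verts H₂.verts := by
  obtain ⟨c, hc⟩ := hk ▸ G.exists_isProperColoring_chromIndex
  refine Set.disjoint_left.2 fun v hv₁ hv₂ ↦ hne ?_
  obtain ⟨α, hα⟩ := G.missingOn_nonempty_of_degree_lt (c := c)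
    ((G.degree_le_maxDegree v).trans_lt hΔ)
  have hodd := hc.odd_ncard_verts_inf h₁.1.2 h₂.1.2 hv₁ hv₂ hα
  have hsup : G.IsDenseIn ∅ k (H₁ ⊔ H₂) := ⟨Set.inter_empty _, hc.isDense_sup h₁.1.2 h₂.1.2 hodd⟩
  exact (h₁.eq_of_isDenseIn hsup Set.subset_union_left Set.subset_union_left).trans
    (h₂.eq_of_isDenseIn hsup Set.subset_union_right Set.subset_union_right).symm
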